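/- Let H be a Hopf algebra over a field k, A ⊆ H a right coideal subalgebra, C = H/HA⁺ with projection π, and X an object of ᴴ𝓜ᶜ. Then the map ∇_X : C ⊗ X → C ⊗ (C ⊗ X), π(h) ⊗ x ↦ π(h) ⊗ x₍₋₁₎ ⊗ x₍₀₎ − π(h₍₁₎) ⊗ π(h₍₂₎) ⊗ x, is a well-defined morphism in the category ᴴ𝓜ᶜ. -/

import Mathlib

open TensorProduct

noncomputable section

universe v

section Coideal

variable {k : Type*} [Field k] {H : Type*} [Ring H] [HopfAlgebra k H]

/-- `A` is a right coideal subalgebra of `H`: `Δ(A) ⊆ A ⊗ H`. -/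
def IsRightCoidealSubalgebra (A : Subalgebra k H) : Prop :=
  ∀ a ∈ A, Coalgebra.comul (R := k) a ∈
    LinearMap.range (TensorProduct.map (Subalgebra.toSubmodule A).subtype
      (LinearMap.id (R := k) (M := H)))

/-- `A` is a left coideal subalgebra of `H`: `Δ(A) ⊆ H ⊗ A`. -/
def IsLeftCoidealSubalgebra (A : Subalgebra k H) : Prop :=
  ∀ a ∈ A, Coalgebra.comul (R := k) a ∈
    LinearMap.range (TensorProduct.map (LinearMap.id (R := k) (M := H))
      (Subalgebra.toSubmodule A).subtype)

end Coideal

section Hopf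

variable {k : Type*} [Field k] {H : Type*} [Ring H] [HopfAlgebra k H]

/-- The action of `H` on a module, as a `k`-bilinear map. -/
def sAct (Y : Type*) [AddCommGroup Y] [Module k Y] [Module H Y] [IsScalarTower k H Y] :
    H →ₗ[k] Module.End k Y :=
  LinearMap.mk₂ k (fun h y => h • y)
    (fun h h' y => add_smul h h' y)
    (fun c h y => smul_assoc c h y)
    (fun h y y' => smul_add h y y')
    (fun c h y => show h • c • y = c • h • y by
      rw [← algebraMap_smul H c y, smul_smul, ← Algebra.commutes, ← smul_smul, algebraMap_smul])

variable (A : Subalgebra k H)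

/-- The augmentation ideal `A⁺ = Ker ε ∩ A` of a (coideal) subalgebra `A ⊆ H`. -/
def aPlus : Set H := {a : H | a ∈ A ∧ Coalgebra.counit (R := k) a = 0}

/-- The left ideal `HA⁺` of `H` generated by `A⁺`. -/
def Iide : Submodule H H := Submodule.span H (aPlus A)

/-- The quotient `C = H / HA⁺`, a left `H`-module. -/
abbrev Cq := H ⧸ Iide A

/-- The canonical projection `π : H → C = H/HA⁺`. -/
def piC : H →ₗ[k] Cq A := LinearMap.restrictScalars k (Iide A).mkQ

/-- The diagonal action of `H` on a tensor product, through given actions on the two factors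
and the comultiplication of `H`: `h • (y ⊗ z) = Σ h₍₁₎ • y ⊗ h₍₂₎ • z`. -/
def hAct2 {Y Z : Type*} [AddCommGroup Y] [Module k Y] [AddCommGroup Z] [Module k Z]
    (sY : H →ₗ[k] Module.End k Y) (sZ : H →ₗ[k] Module.End k Z) :
    H →ₗ[k] Module.End k (Y ⊗[k] Z) :=
  (TensorProduct.homTensorHomMap (RingHom.id k) Y Z Y Z) ∘ₗ (TensorProduct.map sY sZ) ∘ₗ
    (Coalgebra.comul (R := k))

/-- The coaction of `C` on `C ⊗ Y` given by the comultiplication of `C` on the first factor. -/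
def coactC (Y : Type*) [AddCommGroup Y] [Module k Y]
    (Δc : Cq A →ₗ[k] Cq A ⊗[k] Cq A) :
    Cq A ⊗[k] Y →ₗ[k] Cq A ⊗[k] (Cq A ⊗[k] Y) :=
  (TensorProduct.assoc k (Cq A) (Cq A) Y).toLinearMap ∘ₗ LinearMap.rTensor Y Δc

/-- An object of the category `ᴴ𝓜ᶜ`: a left `H`-module `X` together with a left `C`-comodule
structure `coact : X → C ⊗ X` (coassociative and counital), which is left `H`-linear in the
sense that `(h • x)₍₋₁₎ ⊗ (h • x)₍₀₎ = h₍₁₎ • x₍₋₁₎ ⊗ h₍₂₎ • x₍₀₎`. -/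
structure HMCObj (Δc : Cq A →ₗ[k] Cq A ⊗[k] Cq A) (εc : Cq A →ₗ[k] k)
    (X : Type v) [AddCommGroup X] [Module k X] [Module H X] [IsScalarTower k H X] where
  /-- the coaction `x ↦ x₍₋₁₎ ⊗ x₍₀₎` -/
  coact : X →ₗ[k] Cq A ⊗[k] X
  counit_law : ∀ x : X,
    (TensorProduct.lid k X) ((LinearMap.rTensor X εc) (coact x)) = x
  coassoc : ∀ x : X,
    (TensorProduct.assoc k (Cq A) (Cq A) X) ((LinearMap.rTensor X Δc) (coact x)) =
      (LinearMap.lTensor (Cq A) coact) (coact x)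
  hlinear : ∀ (h : H) (x : X),
    coact (h • x) = hAct2 (sAct (Cq A)) (sAct X) h (coact x)

variable {A}

/-- The map `δ_X : X → C ⊗ X`, `x ↦ x₍₋₁₎ ⊗ x₍₀₎ - π(1) ⊗ x`. -/
def deltaX {X : Type*} [AddCommGroup X] [Module k X] (α : X →ₗ[k] Cq A ⊗[k] X) :
    X →ₗ[k] Cq A ⊗[k] X :=
  α - (TensorProduct.mk k (Cq A) X) (piC A 1)

/-- The coinvariants `ᶜᵒᶜX = {x | x₍₋₁₎ ⊗ x₍₀₎ = π(1) ⊗ x}`, as a `k`-submodule of `X`. -/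
def coinv {X : Type*} [AddCommGroup X] [Module k X] (α : X →ₗ[k] Cq A ⊗[k] X) :
    Submodule k X :=
  LinearMap.ker (deltaX α)

variable (A)

/-- The relations defining `H ⊗_A M` inside `H ⊗[k] M`, for a module `M` with a given
`A`-action `ρ`. -/
def genRel (M : Type*) [AddCommGroup M] [Module k M] (ρ : A → M → M) :
    Submodule k (H ⊗[k] M) :=
  Submodule.span k
    {t : H ⊗[k] M | ∃ (h : H) (a : A) (m : M), t = (h * (a : H)) ⊗ₜ[k] m - h ⊗ₜ[k] ρ a m}

/-- The relations defining `H ⊗_A S` inside `H ⊗[k] S` for a submodule `S ⊆ Y` stable under an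
`A`-action `σ` on `Y`. -/
def genRelS {Y : Type*} [AddCommGroup Y] [Module k Y] (S : Submodule k Y) (σ : A → Y → Y) :
    Submodule k (H ⊗[k] S) :=
  Submodule.span k
    {t : H ⊗[k] S | ∃ (h : H) (a : A) (y : S) (hy : σ a (y : Y) ∈ S),
      t = (h * (a : H)) ⊗ₜ[k] y - h ⊗ₜ[k] (⟨σ a (y : Y), hy⟩ : S)}

/-- The tensor product `H ⊗_A M`, presented as the quotient of `H ⊗[k] M` by relations
`R'`. -/
abbrev TensQ {M : Type*} [AddCommGroup M] [Module k M] (R' : Submodule k (H ⊗[k] M)) :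
    Type _ := (H ⊗[k] M) ⧸ R'

/-- Left multiplication by `b` on the first factor of `H ⊗[k] M`. -/
def mulLeftT (M : Type*) [AddCommGroup M] [Module k M] (b : H) :
    H ⊗[k] M →ₗ[k] H ⊗[k] M :=
  LinearMap.rTensor M (LinearMap.mulLeft k b)

lemma genRel_mulLeftT_le (M : Type*) [AddCommGroup M] [Module k M] (ρ : A → M → M) (b : H) :
    Submodule.map (mulLeftT M b) (genRel A M ρ) ≤ genRel A M ρ := by
  rw [genRel, Submodule.map_span, Submodule.span_le]
  rintro _ ⟨_, ⟨h, a, m, rfl⟩, rfl⟩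
  refine Submodule.subset_span ⟨b * h, a, m, ?_⟩
  simp [mulLeftT, mul_assoc]

lemma genRelS_mulLeftT_le {Y : Type*} [AddCommGroup Y] [Module k Y] (S : Submodule k Y)
    (σ : A → Y → Y) (b : H) :
    Submodule.map (mulLeftT (↥S) b) (genRelS A S σ) ≤ genRelS A S σ := by
  rw [genRelS, Submodule.map_span, Submodule.span_le]
  rintro _ ⟨_, ⟨h, a, y, hy, rfl⟩, rfl⟩
  refine Submodule.subset_span ⟨b * h, a, y, hy, ?_⟩
  simp [mulLeftT, mul_assoc]

/-- The left `H`-module structure on a quotient `(H ⊗[k] M) ⧸ R'`, when the relations `R'` are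
stable under left multiplication on the first factor: this is the `H`-action by left
multiplication on `H ⊗_A M`. -/
def hMulQ {M : Type*} [AddCommGroup M] [Module k M] (R' : Submodule k (H ⊗[k] M))
    (hR' : ∀ b : H, Submodule.map (mulLeftT M b) R' ≤ R') :
    H →ₗ[k] Module.End k ((H ⊗[k] M) ⧸ R') where
  toFun b := Submodule.mapQ R' R' (mulLeftT M b)
    (fun x hx => hR' b ⟨x, hx, rfl⟩)
  map_add' b b' := by
    apply Submodule.linearMap_qext
    apply TensorProduct.ext'
    intro h m
    simp [mulLeftT, add_mul, TensorProduct.add_tmul]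
  map_smul' c b := by
    apply Submodule.linearMap_qext
    apply TensorProduct.ext'
    intro h m
    simp only [mulLeftT, LinearMap.coe_comp, Function.comp_apply, Submodule.mkQ_apply,
      Submodule.mapQ_apply, LinearMap.rTensor_tmul, LinearMap.mulLeft_apply, RingHom.id_apply,
      LinearMap.smul_apply, smul_mul_assoc]
    rw [← TensorProduct.smul_tmul', Submodule.Quotient.mk_smul]

/-- The coaction `h ⊗ m ↦ π(h₍₁₎) ⊗ (h₍₂₎ ⊗ m)` on `H ⊗[k] M`, with values in
`C ⊗ ((H ⊗[k] M) ⧸ R')`. -/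
def indC0 {M : Type*} [AddCommGroup M] [Module k M] (R' : Submodule k (H ⊗[k] M)) :
    H ⊗[k] M →ₗ[k] Cq A ⊗[k] ((H ⊗[k] M) ⧸ R') :=
  (TensorProduct.map (piC A) R'.mkQ) ∘ₗ (TensorProduct.assoc k H H M).toLinearMap ∘ₗ
    (LinearMap.rTensor M (Coalgebra.comul (R := k)))

/-- The canonical map `H ⊗ X → C ⊗ X`, `h ⊗ x ↦ π(h₍₁₎) ⊗ h₍₂₎ • x`. -/
def kappa0 (X : Type*) [AddCommGroup X] [Module k X] [Module H X] [IsScalarTower k H X] :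
    H ⊗[k] X →ₗ[k] Cq A ⊗[k] X :=
  (TensorProduct.map (piC A) (TensorProduct.lift (sAct X))) ∘ₗ
    (TensorProduct.assoc k H H X).toLinearMap ∘ₗ
    (LinearMap.rTensor X (Coalgebra.comul (R := k)))

/-- The map `H ⊗ X → H ⊗ X`, `h ⊗ x ↦ h₍₁₎ ⊗ S(h₍₂₎) • x`. -/
def theta (X : Type*) [AddCommGroup X] [Module k X] [Module H X] [IsScalarTower k H X] :
    H ⊗[k] X →ₗ[k] H ⊗[k] X :=
  (LinearMap.lTensor H
      ((TensorProduct.lift (sAct X)) ∘ₗ (LinearMap.rTensor X (HopfAlgebra.antipode (R := k))))) ∘ₗ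
    (TensorProduct.assoc k H H X).toLinearMap ∘ₗ
    (LinearMap.rTensor X (Coalgebra.comul (R := k)))

/-- The map `∇_X : C ⊗ X → C ⊗ (C ⊗ X)`,
`π(h) ⊗ x ↦ π(h) ⊗ x₍₋₁₎ ⊗ x₍₀₎ - π(h₍₁₎) ⊗ π(h₍₂₎) ⊗ x`. -/
def nablaX (Δc : Cq A →ₗ[k] Cq A ⊗[k] Cq A) {X : Type*} [AddCommGroup X] [Module k X]
    (α : X →ₗ[k] Cq A ⊗[k] X) : Cq A ⊗[k] X →ₗ[k] Cq A ⊗[k] (Cq A ⊗[k] X) :=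
  LinearMap.lTensor (Cq A) α - coactC A X Δc

end Hopf

/-!
Everything `∇_X` needs from `C = H/HA⁺` descends from `H` along the surjection `π`, which satisfies
`π(ab) = a • π(b)` and `Δ_C ∘ π = (π ⊗ π) ∘ Δ`: multiplicativity of `Δ` makes `Δ_C` an `H`-linear
map, and coassociativity of `Δ` makes it coassociative.
With `ρ_X` the coaction, `∇_X = id_C ⊗ ρ_X - (Δ_C ⊗ id_X)` up to reassociation. Both terms are
`H`-linear for the diagonal actions because `ρ_X` and `Δ_C` are, the diagonal action being natural
and, by coassociativity of `Δ`, compatible with the associator. For colinearity, the cofree coaction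
`Δ_C ⊗ id` on `C ⊗ Y` is natural in `Y`, which handles `id_C ⊗ ρ_X`, and coassociative, which
handles `Δ_C ⊗ id_X`.
-/

open LinearMap

section DiagonalAction

variable {k : Type*} [Field k] {H : Type*} [Ring H] [HopfAlgebra k H]
  {M N P M' N' : Type*} [AddCommGroup M] [Module k M] [AddCommGroup N] [Module k N]
  [AddCommGroup P] [Module k P] [AddCommGroup M'] [Module k M'] [AddCommGroup N'] [Module k N']

lemma map_comp_hAct2 {σM : H →ₗ[k] Module.End k M} {σN : H →ₗ[k] Module.End k N}
    {σM' : H →ₗ[k] Module.End k M'} {σN' : H →ₗ[k] Module.End k N'}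
    {f : M →ₗ[k] M'} {g : N →ₗ[k] N'}
    (hf : ∀ h : H, f ∘ₗ σM h = σM' h ∘ₗ f) (hg : ∀ h : H, g ∘ₗ σN h = σN' h ∘ₗ g) (h : H) :
    map f g ∘ₗ hAct2 σM σN h = hAct2 σM' σN' h ∘ₗ map f g := by
  suffices key : ∀ u : H ⊗[k] H,
      map f g ∘ₗ homTensorHomMap (RingHom.id k) M N M N (map σM σN u) =
        homTensorHomMap (RingHom.id k) M' N' M' N' (map σM' σN' u) ∘ₗ map f g from
    key (Coalgebra.comul h)
  intro u
  induction u using TensorProduct.induction_on with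
  | zero => simp
  | tmul a b =>
      simp only [map_tmul, homTensorHomMap_apply, ← map_comp, hf a, hg b]
  | add u v hu hv => simp only [map_add, add_comp, comp_add, hu, hv]

lemma assoc_comp_hAct2 (σM : H →ₗ[k] Module.End k M) (σN : H →ₗ[k] Module.End k N)
    (σP : H →ₗ[k] Module.End k P) (h : H) :
    (TensorProduct.assoc k M N P).toLinearMap ∘ₗ hAct2 (hAct2 σM σN) σP h =
      hAct2 σM (hAct2 σN σP) h ∘ₗ (TensorProduct.assoc k M N P).toLinearMap := by
  set act₂ : H ⊗[k] H →ₗ[k] Module.End k (M ⊗[k] N) :=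
    homTensorHomMap (RingHom.id k) M N M N ∘ₗ map σM σN
  set act₂' : H ⊗[k] H →ₗ[k] Module.End k (N ⊗[k] P) :=
    homTensorHomMap (RingHom.id k) N P N P ∘ₗ map σN σP
  suffices key : ∀ w : (H ⊗[k] H) ⊗[k] H,
      (TensorProduct.assoc k M N P).toLinearMap ∘ₗ
          homTensorHomMap (RingHom.id k) (M ⊗[k] N) P (M ⊗[k] N) P (map act₂ σP w) =
        homTensorHomMap (RingHom.id k) M (N ⊗[k] P) M (N ⊗[k] P)
            (map σM act₂' (TensorProduct.assoc k H H H w)) ∘ₗ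
          (TensorProduct.assoc k M N P).toLinearMap by
    calc (TensorProduct.assoc k M N P).toLinearMap ∘ₗ hAct2 (hAct2 σM σN) σP h
        = (TensorProduct.assoc k M N P).toLinearMap ∘ₗ
            homTensorHomMap (RingHom.id k) (M ⊗[k] N) P (M ⊗[k] N) P
              (map act₂ σP (rTensor H Coalgebra.comul (Coalgebra.comul h))) := by
          rw [← comp_apply (map act₂ σP), map_comp_rTensor]; rfl
      _ = _ := key _
      _ = hAct2 σM (hAct2 σN σP) h ∘ₗ (TensorProduct.assoc k M N P).toLinearMap := by
          rw [Coalgebra.coassoc_apply, ← comp_apply (map σM act₂'), map_comp_lTensor]; rfl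
  intro w
  induction w using TensorProduct.induction_on with
  | zero => simp
  | tmul uv c =>
      induction uv using TensorProduct.induction_on with
      | zero => simp
      | tmul a b =>
          simp only [act₂, act₂', map_tmul, TensorProduct.assoc_tmul, comp_apply,
            homTensorHomMap_apply]
          exact map_map_comp_assoc_eq (σM a) (σN b) (σP c) |>.symm
      | add u v hu hv => simp only [add_tmul, map_add, add_comp, comp_add, hu, hv]
  | add u v hu hv => simp only [map_add, add_comp, comp_add, hu, hv]

end DiagonalAction

section QuotientCoalgebra

variable {R D C : Type*} [CommRing R] [AddCommGroup D] [Module R D] [Coalgebra R D]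
  [AddCommGroup C] [Module R C]

lemma coassoc_of_surjective {p : D →ₗ[R] C} (hp : Function.Surjective p)
    {Δc : C →ₗ[R] C ⊗[R] C} (hΔc : ∀ d : D, Δc (p d) = map p p (Coalgebra.comul d)) :
    (TensorProduct.assoc R C C C).toLinearMap ∘ₗ rTensor C Δc ∘ₗ Δc = lTensor C Δc ∘ₗ Δc := by
  have hΔc' : Δc ∘ₗ p = map p p ∘ₗ Coalgebra.comul := LinearMap.ext hΔc
  have hr : rTensor C Δc ∘ₗ map p p = map (map p p) p ∘ₗ rTensor D Coalgebra.comul := by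
    rw [rTensor_comp_map, hΔc', map_comp_rTensor]
  have hl : lTensor C Δc ∘ₗ map p p = map p (map p p) ∘ₗ lTensor D Coalgebra.comul := by
    rw [lTensor_comp_map, hΔc', map_comp_lTensor]
  ext c
  obtain ⟨d, rfl⟩ := hp c
  simp only [comp_apply, LinearEquiv.coe_coe, hΔc]
  rw [← comp_apply (rTensor C Δc), hr, ← comp_apply (lTensor C Δc), hl, comp_apply, comp_apply,
    ← map_map_assoc, Coalgebra.coassoc_apply]

variable {k : Type*} [Field k] {H : Type*} [Ring H] [HopfAlgebra k H]
  {Q : Type*} [AddCommGroup Q] [Module k Q] [Module H Q] [IsScalarTower k H Q]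

lemma comul_comp_sAct_of_surjective {p : H →ₗ[k] Q} (hp : Function.Surjective p)
    (hp_mul : ∀ a b : H, p (a * b) = a • p b)
    {Δc : Q →ₗ[k] Q ⊗[k] Q} (hΔc : ∀ h : H, Δc (p h) = map p p (Coalgebra.comul h)) (h : H) :
    Δc ∘ₗ sAct Q h = hAct2 (sAct Q) (sAct Q) h ∘ₗ Δc := by
  have hmap_mul : ∀ u v : H ⊗[k] H, map p p (u * v) =
      homTensorHomMap (RingHom.id k) Q Q Q Q (map (sAct Q) (sAct Q) u) (map p p v) := by
    intro u v
    induction u using TensorProduct.induction_on with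
    | zero => simp
    | add u u' hu hu' => simp only [add_mul, map_add, LinearMap.add_apply, hu, hu']
    | tmul a b =>
        induction v using TensorProduct.induction_on with
        | zero => simp
        | add v w hv hw => simp only [mul_add, map_add, hv, hw]
        | tmul c d =>
            simp only [Algebra.TensorProduct.tmul_mul_tmul, map_tmul, homTensorHomMap_apply,
              hp_mul]
            rfl
  ext q
  obtain ⟨g, rfl⟩ := hp q
  change Δc (h • p g) = hAct2 (sAct Q) (sAct Q) h (Δc (p g))
  rw [← hp_mul, hΔc, hΔc, Bialgebra.comul_mul, hmap_mul]
  rfl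

end QuotientCoalgebra

section Nabla

variable {k : Type*} [Field k] {H : Type*} [Ring H] [HopfAlgebra k H] {A : Subalgebra k H}
  {Δc : Cq A →ₗ[k] Cq A ⊗[k] Cq A} {Y Z : Type*} [AddCommGroup Y] [Module k Y]
  [AddCommGroup Z] [Module k Z] {X : Type*} [AddCommGroup X] [Module k X]

lemma piC_surjective : Function.Surjective (piC A) := (Iide A).mkQ_surjective

lemma piC_mul (a b : H) : piC A (a * b) = a • piC A b := by
  change (Iide A).mkQ (a * b) = a • (Iide A).mkQ b
  rw [← smul_eq_mul, map_smul]

lemma nablaX_tmul (α : X →ₗ[k] Cq A ⊗[k] X) (c : Cq A) (x : X) :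
    nablaX A Δc α (c ⊗ₜ x) = c ⊗ₜ α x - TensorProduct.assoc k (Cq A) (Cq A) X (Δc c ⊗ₜ x) :=
  rfl

lemma nablaX_comp_hAct2 [Module H X] [IsScalarTower k H X] {α : X →ₗ[k] Cq A ⊗[k] X}
    (hΔc : ∀ h : H, Δc ∘ₗ sAct (Cq A) h = hAct2 (sAct (Cq A)) (sAct (Cq A)) h ∘ₗ Δc)
    (hα : ∀ h : H, α ∘ₗ sAct X h = hAct2 (sAct (Cq A)) (sAct X) h ∘ₗ α) (h : H) :
    nablaX A Δc α ∘ₗ hAct2 (sAct (Cq A)) (sAct X) h =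
      hAct2 (sAct (Cq A)) (hAct2 (sAct (Cq A)) (sAct X)) h ∘ₗ nablaX A Δc α := by
  have hnablaX : nablaX A Δc α = map LinearMap.id α -
      (TensorProduct.assoc k (Cq A) (Cq A) X).toLinearMap ∘ₗ map Δc LinearMap.id := rfl
  rw [hnablaX, sub_comp, comp_sub, map_comp_hAct2 (σM' := sAct (Cq A)) (fun _ => rfl) hα,
    comp_assoc, map_comp_hAct2 (σN' := sAct X) hΔc (fun _ => rfl), ← comp_assoc,
    assoc_comp_hAct2, comp_assoc]

lemma coactC_comp_lTensor (f : Y →ₗ[k] Z) :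
    coactC A Z Δc ∘ₗ lTensor (Cq A) f = lTensor (Cq A) (lTensor (Cq A) f) ∘ₗ coactC A Y Δc := by
  have hassoc : (TensorProduct.assoc k (Cq A) (Cq A) Z).toLinearMap ∘ₗ
      lTensor (Cq A ⊗[k] Cq A) f =
        lTensor (Cq A) (lTensor (Cq A) f) ∘ₗ TensorProduct.assoc k (Cq A) (Cq A) Y :=
    ext_threefold fun _ _ _ => rfl
  rw [coactC, coactC, comp_assoc, rTensor_comp_lTensor, ← lTensor_comp_rTensor, ← comp_assoc,
    hassoc, comp_assoc]

lemma coactC_comp_coactC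
    (hΔc : (TensorProduct.assoc k (Cq A) (Cq A) (Cq A)).toLinearMap ∘ₗ rTensor (Cq A) Δc ∘ₗ Δc =
      lTensor (Cq A) Δc ∘ₗ Δc) :
    coactC A (Cq A ⊗[k] Y) Δc ∘ₗ coactC A Y Δc =
      lTensor (Cq A) (coactC A Y Δc) ∘ₗ coactC A Y Δc := by
  have hnat : rTensor (Cq A ⊗[k] Y) Δc ∘ₗ (TensorProduct.assoc k (Cq A) (Cq A) Y).toLinearMap =
      (TensorProduct.assoc k (Cq A ⊗[k] Cq A) (Cq A) Y).toLinearMap ∘ₗ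
        rTensor Y (rTensor (Cq A) Δc) := by
    have := map_map_comp_assoc_eq Δc (LinearMap.id : Cq A →ₗ[k] Cq A) (LinearMap.id : Y →ₗ[k] Y)
    rw [map_id] at this
    exact this
  have pentagon : (TensorProduct.assoc k (Cq A) (Cq A) (Cq A ⊗[k] Y)).toLinearMap ∘ₗ
      (TensorProduct.assoc k (Cq A ⊗[k] Cq A) (Cq A) Y).toLinearMap =
        lTensor (Cq A) (TensorProduct.assoc k (Cq A) (Cq A) Y).toLinearMap ∘ₗ
          (TensorProduct.assoc k (Cq A) (Cq A ⊗[k] Cq A) Y).toLinearMap ∘ₗ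
            rTensor Y (TensorProduct.assoc k (Cq A) (Cq A) (Cq A)).toLinearMap :=
    ext_fourfold fun _ _ _ _ => rfl
  calc coactC A (Cq A ⊗[k] Y) Δc ∘ₗ coactC A Y Δc
      = ((TensorProduct.assoc k (Cq A) (Cq A) (Cq A ⊗[k] Y)).toLinearMap ∘ₗ
          (TensorProduct.assoc k (Cq A ⊗[k] Cq A) (Cq A) Y).toLinearMap) ∘ₗ
            rTensor Y (rTensor (Cq A) Δc ∘ₗ Δc) := by
        simp only [coactC, rTensor_comp, comp_assoc]
        rw [← comp_assoc (rTensor Y Δc) _ (rTensor (Cq A ⊗[k] Y) Δc), hnat]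
        rfl
    _ = (lTensor (Cq A) (TensorProduct.assoc k (Cq A) (Cq A) Y).toLinearMap ∘ₗ
          (TensorProduct.assoc k (Cq A) (Cq A ⊗[k] Cq A) Y).toLinearMap) ∘ₗ
            rTensor Y ((TensorProduct.assoc k (Cq A) (Cq A) (Cq A)).toLinearMap ∘ₗ
              rTensor (Cq A) Δc ∘ₗ Δc) := by
        rw [pentagon]
        simp only [rTensor_comp, comp_assoc]
    _ = lTensor (Cq A) (coactC A Y Δc) ∘ₗ coactC A Y Δc := by
        rw [hΔc]
        simp only [coactC, rTensor_comp, lTensor_comp, comp_assoc]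
        rw [← comp_assoc (rTensor Y Δc) _ (lTensor (Cq A) (rTensor Y Δc)),
          lTensor_rTensor_comp_assoc]
        rfl

lemma coactC_comp_nablaX {α : X →ₗ[k] Cq A ⊗[k] X}
    (hΔc : (TensorProduct.assoc k (Cq A) (Cq A) (Cq A)).toLinearMap ∘ₗ rTensor (Cq A) Δc ∘ₗ Δc =
      lTensor (Cq A) Δc ∘ₗ Δc) :
    coactC A (Cq A ⊗[k] X) Δc ∘ₗ nablaX A Δc α =
      lTensor (Cq A) (nablaX A Δc α) ∘ₗ coactC A X Δc := by
  rw [nablaX, comp_sub, coactC_comp_lTensor, coactC_comp_coactC hΔc, lTensor_sub, sub_comp]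

end Nabla

theorem nablaX_isMorphism_general
    {k : Type*} [Field k] {H : Type*} [Ring H] [HopfAlgebra k H]
    (A : Subalgebra k H)
    (Δc : Cq A →ₗ[k] Cq A ⊗[k] Cq A) (εc : Cq A →ₗ[k] k)
    (hΔc : ∀ h : H, Δc (piC A h) =
      TensorProduct.map (piC A) (piC A) (Coalgebra.comul (R := k) h))
    (X : Type v) [AddCommGroup X] [Module k X] [Module H X] [IsScalarTower k H X]
    (o : HMCObj A Δc εc X) :
    (∀ (h : H) (x : X), nablaX A Δc o.coact (piC A h ⊗ₜ[k] x) =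
      piC A h ⊗ₜ[k] o.coact x -
        (TensorProduct.assoc k (Cq A) (Cq A) X) (Δc (piC A h) ⊗ₜ[k] x)) ∧
    (∀ (h : H) (t : Cq A ⊗[k] X),
      nablaX A Δc o.coact (hAct2 (sAct (Cq A)) (sAct X) h t) =
        hAct2 (sAct (Cq A)) (hAct2 (sAct (Cq A)) (sAct X)) h (nablaX A Δc o.coact t)) ∧
    (∀ t : Cq A ⊗[k] X,
      coactC A (Cq A ⊗[k] X) Δc (nablaX A Δc o.coact t) =
        LinearMap.lTensor (Cq A) (nablaX A Δc o.coact) (coactC A X Δc t)) := by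
  have hΔc_linear := comul_comp_sAct_of_surjective piC_surjective piC_mul hΔc
  have hcoact_linear : ∀ h : H, o.coact ∘ₗ sAct X h = hAct2 (sAct (Cq A)) (sAct X) h ∘ₗ o.coact :=
    fun h => LinearMap.ext (o.hlinear h)
  have hΔc_coassoc := coassoc_of_surjective piC_surjective hΔc
  exact ⟨fun h x => nablaX_tmul o.coact (piC A h) x,
    fun h => LinearMap.congr_fun (nablaX_comp_hAct2 hΔc_linear hcoact_linear h),
    LinearMap.congr_fun (coactC_comp_nablaX hΔc_coassoc)⟩

/-- For an object `X` of `ᴴ𝓜ᶜ`, the map `∇_X : C ⊗ X → C ⊗ (C ⊗ X)`,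
`π(h) ⊗ x ↦ π(h) ⊗ x₍₋₁₎ ⊗ x₍₀₎ - π(h₍₁₎) ⊗ π(h₍₂₎) ⊗ x`, is a well-defined morphism in
`ᴴ𝓜ᶜ`: it satisfies the stated formula, is `H`-linear, and is `C`-colinear. -/
theorem nablaX_isMorphism
    {k : Type*} [Field k] {H : Type*} [Ring H] [HopfAlgebra k H]
    (A : Subalgebra k H) (hA : IsRightCoidealSubalgebra A)
    (Δc : Cq A →ₗ[k] Cq A ⊗[k] Cq A) (εc : Cq A →ₗ[k] k)
    (hΔc : ∀ h : H, Δc (piC A h) =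
      TensorProduct.map (piC A) (piC A) (Coalgebra.comul (R := k) h))
    (hεc : ∀ h : H, εc (piC A h) = Coalgebra.counit (R := k) h)
    (X : Type v) [AddCommGroup X] [Module k X] [Module H X] [IsScalarTower k H X]
    (o : HMCObj A Δc εc X) :
    (∀ (h : H) (x : X), nablaX A Δc o.coact (piC A h ⊗ₜ[k] x) =
      piC A h ⊗ₜ[k] o.coact x -
        (TensorProduct.assoc k (Cq A) (Cq A) X) (Δc (piC A h) ⊗ₜ[k] x)) ∧
    (∀ (h : H) (t : Cq A ⊗[k] X),
      nablaX A Δc o.coact (hAct2 (sAct (Cq A)) (sAct X) h t) =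
        hAct2 (sAct (Cq A)) (hAct2 (sAct (Cq A)) (sAct X)) h (nablaX A Δc o.coact t)) ∧
    (∀ t : Cq A ⊗[k] X,
      coactC A (Cq A ⊗[k] X) Δc (nablaX A Δc o.coact t) =
        LinearMap.lTensor (Cq A) (nablaX A Δc o.coact) (coactC A X Δc t)) :=
  nablaX_isMorphism_general A Δc εc hΔc X o
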